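/- arXiv:0906.2359 — 3 statements merged into one kernel-verified Lean document; each statement's English description precedes it below -/
import Mathlib

section
/- For every integer n ≥ 1 and every real x ∈ [-1, 1) and every i ∈ {0, ..., n-1}, one has x^i + x^(i+1) + x^(n-i-1) + x^(n-i) ≤ 2(1 + x^n). -/
/-! Writing `a = x ^ i` and `b = x ^ (n - i - 1)`, both in `[-1, 1]`, the inequality reads
`(a + b) (1 + x) ≤ 2 (1 + a b x)`, and the difference of the two sides is
`(1 - a) (1 - b) (1 + x) + (1 - a b) (1 - x)`, a sum of products of nonnegative factors. -/

theorem add_mul_one_add_le_two_mul_one_add_mul {R : Type*} [CommRing R] [LinearOrder R]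
    [IsStrictOrderedRing R] {a b x : R} (ha : |a| ≤ 1) (hb : |b| ≤ 1) (hx : |x| ≤ 1) :
    (a + b) * (1 + x) ≤ 2 * (1 + a * b * x) := by
  have hab : a * b ≤ 1 :=
    (le_abs_self _).trans (abs_mul a b ▸ mul_le_one₀ ha (abs_nonneg b) hb)
  obtain ⟨-, ha'⟩ := abs_le.mp ha
  obtain ⟨-, hb'⟩ := abs_le.mp hb
  obtain ⟨hx₁, hx₂⟩ := abs_le.mp hx
  have key : 0 ≤ (1 - a) * (1 - b) * (1 + x) + (1 - a * b) * (1 - x) :=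
    add_nonneg (mul_nonneg (mul_nonneg (sub_nonneg.2 ha') (sub_nonneg.2 hb')) (by linarith))
      (mul_nonneg (sub_nonneg.2 hab) (sub_nonneg.2 hx₂))
  linear_combination key

theorem stmt_0 (n : ℕ) (hn : 1 ≤ n) (x : ℝ) (hx1 : -1 ≤ x) (hx2 : x < 1)
    (i : ℕ) (hi : i ≤ n - 1) :
    x ^ i + x ^ (i + 1) + x ^ (n - i - 1) + x ^ (n - i) ≤ 2 * (1 + x ^ n) := by
  have hx : |x| ≤ 1 := abs_le.mpr ⟨hx1, hx2.le⟩
  have hpow (k : ℕ) : |x ^ k| ≤ 1 := abs_pow x k ▸ pow_le_one₀ (abs_nonneg x) hx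
  have hsucc : x ^ (n - i) = x ^ (n - i - 1) * x := by
    rw [← pow_succ]; congr 1; omega
  have hsplit : x ^ n = x ^ i * x ^ (n - i - 1) * x := by
    rw [← pow_add, ← pow_succ]; congr 1; omega
  have := add_mul_one_add_le_two_mul_one_add_mul (hpow i) (hpow (n - i - 1)) hx
  rw [pow_succ, hsucc, hsplit]
  linear_combination this
end

section
/- Define W(n,x) = (n(1 - x²) - 2x(1 - x^n)) / (1 - x)² for real x ∈ [-1,1) and positive integer n. Then W(n,·) is monotone increasing on [-1,1): if -1 ≤ x ≤ y < 1 then W(n,x) ≤ W(n,y). -/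
/-!
On `x < 1` the derivative of `W n` is `2 K / (1 - x) ^ 3` with
`K = (n - 1) (1 - x ^ (n + 1)) - (n + 1) (x - x ^ n)`. For `n = m + 1`,
`K = (1 - x) ∑_{d < m} (1 - x ^ (d + 1)) (1 - x ^ (m - d))`, and every factor `1 - x ^ k` is
nonnegative when `|x| ≤ 1`, so `W n` is monotone on `[-1, 1)`.
-/

noncomputable def W (n : ℕ) (x : ℝ) : ℝ :=
  ((n : ℝ) * (1 - x ^ 2) - 2 * x * (1 - x ^ n)) / (1 - x) ^ 2

open Finset Set

lemma one_sub_mul_sum_one_sub_pow_mul_one_sub_pow {R : Type*} [CommRing R] (m : ℕ) (x : R) :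
    (1 - x) * ∑ d ∈ range m, (1 - x ^ (d + 1)) * (1 - x ^ (m - d))
      = m * (1 - x ^ (m + 2)) - (m + 2) * (x - x ^ (m + 1)) := by
  have hterm : ∀ d ∈ range m, (1 - x ^ (d + 1)) * (1 - x ^ (m - d))
      = 1 + x ^ (m + 1) - x ^ (d + 1) - x ^ (m - d) := by
    intro d hd
    have : x ^ (d + 1) * x ^ (m - d) = x ^ (m + 1) := by
      rw [← pow_add]; congr 1; have := mem_range.1 hd; omega
    linear_combination this
  have hreflect : ∑ d ∈ range m, x ^ (m - d) = ∑ d ∈ range m, x ^ (d + 1) := by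
    rw [← sum_range_reflect]
    exact sum_congr rfl fun d hd => by have := mem_range.1 hd; congr 1; omega
  have hgeom : (1 - x) * ∑ d ∈ range m, x ^ (d + 1) = x - x ^ (m + 1) := by
    have := mul_neg_geom_sum x (m + 1)
    rw [sum_range_succ'] at this
    linear_combination this
  rw [sum_congr rfl hterm]
  simp only [sum_sub_distrib, sum_const, card_range, nsmul_eq_mul, hreflect]
  linear_combination (-2) * hgeom

section LinearOrderedRing

variable {R : Type*} [CommRing R] [LinearOrder R] [IsStrictOrderedRing R]

lemma pow_le_one_of_abs_le_one {x : R} (hx : |x| ≤ 1) (k : ℕ) : x ^ k ≤ 1 :=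
  (le_abs_self _).trans ((abs_pow x k).trans_le (pow_le_one₀ (abs_nonneg x) hx))

lemma W_deriv_numerator_nonneg (n : ℕ) {x : R} (hx : |x| ≤ 1) :
    0 ≤ ((n : R) - 1) * (1 - x ^ (n + 1)) - (n + 1) * (x - x ^ n) := by
  cases n with
  | zero => simp
  | succ m =>
    have hsum : 0 ≤ ∑ d ∈ range m, (1 - x ^ (d + 1)) * (1 - x ^ (m - d)) :=
      sum_nonneg fun d _ => mul_nonneg (sub_nonneg.2 (pow_le_one_of_abs_le_one hx _))
        (sub_nonneg.2 (pow_le_one_of_abs_le_one hx _))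
    have := mul_nonneg (sub_nonneg.2 (abs_le.1 hx).2) hsum
    rw [one_sub_mul_sum_one_sub_pow_mul_one_sub_pow] at this
    push_cast
    linear_combination this

end LinearOrderedRing

lemma hasDerivAt_W (n : ℕ) {x : ℝ} (hx : x ≠ 1) :
    HasDerivAt (W n)
      (2 * (((n : ℝ) - 1) * (1 - x ^ (n + 1)) - (n + 1) * (x - x ^ n)) / (1 - x) ^ 3) x := by
  have hpow : (n : ℝ) * x ^ (n - 1) * x = n * x ^ n := by
    cases n <;> simp [pow_succ, mul_assoc]
  have hnum : HasDerivAt (fun y => (n : ℝ) * (1 - y ^ 2) - 2 * y * (1 - y ^ n))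
      (-2 * n * x - 2 * (1 - x ^ n) + 2 * n * x ^ n) x :=
    ((((hasDerivAt_pow 2 x).const_sub 1).const_mul (n : ℝ)).sub
      (((hasDerivAt_id' x).const_mul 2).mul ((hasDerivAt_pow n x).const_sub 1))).congr_deriv
      (by norm_num; linear_combination 2 * hpow)
  have hden : HasDerivAt (fun y => (1 - y) ^ 2) (-2 * (1 - x)) x :=
    (((hasDerivAt_id' x).const_sub 1).fun_pow 2).congr_deriv (by norm_num)
  have hx' : 1 - x ≠ 0 := sub_ne_zero.2 hx.symm
  refine (hnum.fun_div hden (pow_ne_zero 2 hx')).congr_deriv ?_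
  field_simp
  ring

theorem monotoneOn_W (n : ℕ) : MonotoneOn (W n) (Ico (-1) 1) := by
  refine monotoneOn_of_hasDerivWithinAt_nonneg (convex_Ico _ _)
    (fun x hx => (hasDerivAt_W n hx.2.ne).continuousAt.continuousWithinAt)
    (fun x hx => (hasDerivAt_W n (interior_subset hx).2.ne).hasDerivWithinAt) fun x hx => ?_
  rw [interior_Ico] at hx
  have : 0 < 1 - x := sub_pos.2 hx.2
  have := W_deriv_numerator_nonneg n (abs_le.2 ⟨hx.1.le, hx.2.le⟩)
  positivity

theorem stmt_2_general (n : ℕ) (x y : ℝ)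
    (hx : -1 ≤ x) (hxy : x ≤ y) (hy : y < 1) :
    W n x ≤ W n y :=
  monotoneOn_W n ⟨hx, hxy.trans_lt hy⟩ ⟨hx.trans hxy, hy⟩ hxy

theorem stmt_2 (n : ℕ) (hn : 1 ≤ n) (x y : ℝ)
    (hx : -1 ≤ x) (hxy : x ≤ y) (hy : y < 1) :
    W n x ≤ W n y :=
  stmt_2_general n x y hx hxy hy
end

section
/- Let P be a row-stochastic matrix on a finite set D, reversible and ergodic with respect to a positive probability distribution π, and let β be the second largest absolute value of its eigenvalues. Then for every n ≥ 1, the operator norm of P^n on the mean-zero subspace l₄⁰(D,π) satisfies ‖P^n‖_{l₄⁰→l₄⁰} ≤ 2√2 · β^{n/2}. -/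
/-!
Instead of interpolating, we bound the fourth moment directly. Let `Q = Pⁿ` and `t = β²ⁿ`.
Expanding in the orthonormal eigenbasis, whose constant vector is orthogonal to mean-zero
functions, Parseval gives the spectral gap `‖Qh‖₂² ≤ t ‖h‖₂²` for mean-zero `h`.
Now let `g = Qf` with `f` of mean zero. Jensen gives `g² ≤ Q(f²)`, so by self-adjointness and
Cauchy–Schwarz `‖g‖₄⁴ ≤ ⟪Q(g²), f²⟫ ≤ ‖Q(g²)‖₂ ‖f‖₄²`. Splitting `g²` into its mean `‖g‖₂²` and a
mean-zero part, the spectral gap gives `‖Q(g²)‖₂² ≤ ‖g‖₂⁴ + t ‖g‖₄⁴`, while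
`‖g‖₂² ≤ t ‖f‖₂² ≤ t ‖f‖₄²`. Thus `Y = ‖g‖₄⁴` satisfies `Y² ≤ a² + aY` with `a = t ‖f‖₄⁴`, whence
`Y ≤ 2a` and `‖g‖₄ ≤ 2^{1/4} βⁿᐟ² ‖f‖₄`.
-/

/-- The weighted `l₄(D,π)` norm. -/
noncomputable def norm4 {D : Type*} [Fintype D] (π : D → ℝ) (f : D → ℝ) : ℝ :=
  (∑ x, |f x| ^ 4 * π x) ^ ((1 : ℝ) / 4)

open Matrix Finset

section Mean

variable {D : Type*} [Fintype D] {π : D → ℝ}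

def mean (π h : D → ℝ) : ℝ := ∑ x, h x * π x

lemma norm4_eq_mean_rpow (f : D → ℝ) : norm4 π f = mean π (f ^ 4) ^ (1 / 4 : ℝ) := by
  simp [norm4, mean, Even.pow_abs (by decide : Even 4)]

lemma mean_le_mean (hπ : ∀ x, 0 ≤ π x) {a b : D → ℝ} (hab : ∀ x, a x ≤ b x) :
    mean π a ≤ mean π b :=
  sum_le_sum fun x _ => mul_le_mul_of_nonneg_right (hab x) (hπ x)

lemma mean_nonneg (hπ : ∀ x, 0 ≤ π x) {a : D → ℝ} (ha : ∀ x, 0 ≤ a x) : 0 ≤ mean π a :=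
  sum_nonneg fun x _ => mul_nonneg (ha x) (hπ x)

lemma norm4_nonneg (hπ : ∀ x, 0 ≤ π x) (f : D → ℝ) : 0 ≤ norm4 π f := by
  rw [norm4_eq_mean_rpow]
  exact Real.rpow_nonneg (mean_nonneg hπ fun x => Even.pow_nonneg (by decide) (f x)) _

lemma mean_mul_sq_le (hπ : ∀ x, 0 ≤ π x) (a b : D → ℝ) :
    mean π (a * b) ^ 2 ≤ mean π (a ^ 2) * mean π (b ^ 2) :=
  sum_sq_le_sum_mul_sum_of_sq_le_mul _ (fun x _ => mul_nonneg (sq_nonneg _) (hπ x))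
    (fun x _ => mul_nonneg (sq_nonneg _) (hπ x))
    fun x _ => le_of_eq (by simp only [Pi.mul_apply, Pi.pow_apply]; ring)

lemma mean_add_const_sq (hπ : ∑ x, π x = 1) {h : D → ℝ} (hh : mean π h = 0) (c : ℝ) :
    mean π ((h + fun _ => c) ^ 2) = mean π (h ^ 2) + c ^ 2 := by
  have hexpand : mean π ((h + fun _ => c) ^ 2)
      = mean π (h ^ 2) + 2 * c * mean π h + c ^ 2 * ∑ x, π x := by
    simp only [mean, mul_sum, ← sum_add_distrib, Pi.pow_apply, Pi.add_apply]
    exact sum_congr rfl fun x _ => by ring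
  rw [hexpand, hh, hπ]
  ring

end Mean

section Reversible

variable {D : Type*} [Fintype D] {π : D → ℝ} {Q : Matrix D D ℝ}

def IsReversible (π : D → ℝ) (Q : Matrix D D ℝ) : Prop := ∀ x y, π x * Q x y = π y * Q y x

lemma IsReversible.mean_mul_mulVec (hQ : IsReversible π Q) (a b : D → ℝ) :
    mean π (a * Q *ᵥ b) = mean π (Q *ᵥ a * b) := by
  simp only [mean, Pi.mul_apply, mulVec, dotProduct, mul_sum, sum_mul]
  rw [sum_comm]
  exact sum_congr rfl fun x _ => sum_congr rfl fun y _ => by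
    linear_combination (a y * b x) * hQ y x

lemma IsReversible.mean_mulVec (hQ : IsReversible π Q) (hQ1 : Q *ᵥ 1 = 1) (h : D → ℝ) :
    mean π (Q *ᵥ h) = mean π h := by
  simpa [hQ1] using hQ.mean_mul_mulVec 1 h

lemma IsReversible.mean_sq_mulVec_le (hπ : ∑ x, π x = 1) (hQ : IsReversible π Q)
    (hQ1 : Q *ᵥ 1 = 1) {t : ℝ}
    (hgap : ∀ h, mean π h = 0 → mean π ((Q *ᵥ h) ^ 2) ≤ t * mean π (h ^ 2)) (w : D → ℝ) :
    mean π ((Q *ᵥ w) ^ 2) ≤ mean π w ^ 2 + t * (mean π (w ^ 2) - mean π w ^ 2) := by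
  set m := mean π w
  set h : D → ℝ := fun x => w x - m
  have hh : mean π h = 0 := by simp [h, m, mean, sub_mul, sum_sub_distrib, ← mul_sum, hπ]
  have hw : w = h + fun _ => m := by ext; simp [h]
  have hQw : Q *ᵥ w = Q *ᵥ h + fun _ => m := by
    rw [hw, show (fun _ => m : D → ℝ) = m • 1 by ext; simp, mulVec_add, mulVec_smul, hQ1]
  rw [hQw, mean_add_const_sq hπ (by rwa [hQ.mean_mulVec hQ1]), hw, mean_add_const_sq hπ hh]
  linarith [hgap h hh]

variable [DecidableEq D]

lemma isReversible_iff_semiconjBy : IsReversible π Q ↔ SemiconjBy (diagonal π) Q Qᵀ := by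
  simp only [IsReversible, SemiconjBy, ← Matrix.ext_iff, diagonal_mul, mul_diagonal,
    transpose_apply]
  exact forall_congr' fun x => forall_congr' fun y => by rw [mul_comm (Q y x)]

lemma IsReversible.pow (hQ : IsReversible π Q) (n : ℕ) : IsReversible π (Q ^ n) := by
  rw [isReversible_iff_semiconjBy, transpose_pow]
  exact (isReversible_iff_semiconjBy.1 hQ).pow_right n

lemma sq_mulVec_le_mulVec_sq (hQ : Q ∈ rowStochastic ℝ D) (v : D → ℝ) (x : D) :
    (Q *ᵥ v) x ^ 2 ≤ (Q *ᵥ v ^ 2) x := by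
  have hCS := sum_sq_le_sum_mul_sum_of_sq_le_mul univ (r := fun z => Q x z * v z)
    (fun z _ => nonneg_of_mem_rowStochastic hQ)
    (fun z _ => mul_nonneg (nonneg_of_mem_rowStochastic hQ) (sq_nonneg (v z)))
    fun z _ => le_of_eq (by ring)
  simpa [sum_row_of_mem_rowStochastic hQ, mulVec, dotProduct] using hCS

lemma Matrix.pow_mulVec_eq_pow_smul {v : D → ℝ} {c : ℝ} (hv : Q *ᵥ v = c • v) (n : ℕ) :
    (Q ^ n) *ᵥ v = c ^ n • v := by
  induction n with
  | zero => simp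
  | succ n ih => rw [pow_succ', ← mulVec_mulVec, ih, mulVec_smul, hv, smul_smul, ← pow_succ]

end Reversible

section Spectral

variable {D ι : Type*} [Fintype D] [Fintype ι] [DecidableEq ι] {π : D → ℝ} {u : ι → D → ℝ}

/-- An orthonormal family of `card D` vectors is a basis: for square matrices `UV = 1` forces
`VU = 1`. -/
lemma sum_mul_mul_eq_ite_of_orthonormal [DecidableEq D]
    (hcard : Fintype.card ι = Fintype.card D)
    (hu : ∀ k l, mean π (u k * u l) = if k = l then 1 else 0) (x y : D) :
    ∑ k, u k x * π x * u k y = if x = y then 1 else 0 := by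
  let U : Matrix ι D ℝ := of u
  let V : Matrix D ι ℝ := of fun x k => u k x * π x
  have hUV : U * V = 1 := by
    ext k l
    simpa [U, V, mul_apply, one_apply, mean, mul_assoc] using hu k l
  have hVU := (mul_eq_one_comm_of_equiv (Fintype.equivOfCardEq hcard)).mp hUV
  simpa [U, V, mul_apply, one_apply] using congr_fun₂ hVU x y

lemma sum_mean_mul_mul_eq_of_orthonormal (hcard : Fintype.card ι = Fintype.card D)
    (hu : ∀ k l, mean π (u k * u l) = if k = l then 1 else 0) (h : D → ℝ) (x : D) :
    ∑ k, mean π (h * u k) * u k x = h x := by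
  classical
  calc ∑ k, mean π (h * u k) * u k x = ∑ y, h y * ∑ k, u k y * π y * u k x := by
        simp only [mean, Pi.mul_apply, sum_mul, mul_sum]
        rw [sum_comm]
        exact sum_congr rfl fun y _ => sum_congr rfl fun k _ => by ring
    _ = h x := by simp [sum_mul_mul_eq_ite_of_orthonormal hcard hu]

lemma mean_sq_eq_sum_of_orthonormal (hcard : Fintype.card ι = Fintype.card D)
    (hu : ∀ k l, mean π (u k * u l) = if k = l then 1 else 0) (h : D → ℝ) :
    mean π (h ^ 2) = ∑ k, mean π (h * u k) ^ 2 := by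
  calc mean π (h ^ 2) = ∑ x, (∑ k, mean π (h * u k) * u k x) * h x * π x := by
        simp only [sum_mean_mul_mul_eq_of_orthonormal hcard hu]
        simp only [mean, Pi.pow_apply, sq]
    _ = ∑ k, mean π (h * u k) ^ 2 := by
        simp only [mean, Pi.mul_apply, sum_mul, mul_sum, sq]
        rw [sum_comm]
        exact sum_congr rfl fun k _ => sum_congr rfl fun x _ => sum_congr rfl fun y _ => by ring

lemma IsReversible.mean_sq_mulVec_le_of_orthonormal_eigenvectors {Q : Matrix D D ℝ}
    (hQ : IsReversible π Q) (hcard : Fintype.card ι = Fintype.card D)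
    (hu : ∀ k l, mean π (u k * u l) = if k = l then 1 else 0) {c : ι → ℝ}
    (heig : ∀ k, Q *ᵥ u k = c k • u k) {r : ℝ} (hc : ∀ k, u k = 1 ∨ |c k| ≤ r)
    {h : D → ℝ} (hh : mean π h = 0) :
    mean π ((Q *ᵥ h) ^ 2) ≤ r ^ 2 * mean π (h ^ 2) := by
  rw [mean_sq_eq_sum_of_orthonormal hcard hu, mean_sq_eq_sum_of_orthonormal hcard hu h, mul_sum]
  refine sum_le_sum fun k _ => ?_
  have hcoef : mean π (Q *ᵥ h * u k) = c k * mean π (h * u k) := by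
    rw [← hQ.mean_mul_mulVec, heig]
    simp only [mean, mul_sum, Pi.mul_apply, Pi.smul_apply, smul_eq_mul]
    exact sum_congr rfl fun x _ => by ring
  rw [hcoef, mul_pow]
  rcases hc k with hk | hk
  · simp [hk, hh]
  · exact mul_le_mul_of_nonneg_right (sq_le_sq' (abs_le.1 hk).1 (abs_le.1 hk).2) (sq_nonneg _)

end Spectral

section FourthMoment

variable {D : Type*} [Fintype D] [DecidableEq D] {π : D → ℝ} {Q : Matrix D D ℝ}

lemma le_two_mul_of_sq_le {a y : ℝ} (ha : 0 ≤ a) (h : y ^ 2 ≤ a ^ 2 + a * y) : y ≤ 2 * a := by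
  nlinarith

theorem IsReversible.mean_mulVec_pow_four_le (hπ0 : ∀ x, 0 ≤ π x) (hπ1 : ∑ x, π x = 1)
    (hQ : Q ∈ rowStochastic ℝ D) (hrev : IsReversible π Q) {t : ℝ} (ht : 0 ≤ t)
    (hgap : ∀ h, mean π h = 0 → mean π ((Q *ᵥ h) ^ 2) ≤ t * mean π (h ^ 2))
    {f : D → ℝ} (hf : mean π f = 0) :
    mean π ((Q *ᵥ f) ^ 4) ≤ 2 * t * mean π (f ^ 4) := by
  set g := Q *ᵥ f
  set Y := mean π (g ^ 4)
  set K := mean π (f ^ 4)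
  set M := mean π (g ^ 2)
  have hY0 : 0 ≤ Y := mean_nonneg hπ0 fun x => Even.pow_nonneg (by decide) (g x)
  have hK0 : 0 ≤ K := mean_nonneg hπ0 fun x => Even.pow_nonneg (by decide) (f x)
  have hM0 : 0 ≤ M := mean_nonneg hπ0 fun x => sq_nonneg (g x)
  have hYT : Y ≤ mean π (Q *ᵥ g ^ 2 * f ^ 2) := by
    rw [← hrev.mean_mul_mulVec]
    refine mean_le_mean hπ0 fun x => ?_
    have hJensen := sq_mulVec_le_mulVec_sq hQ f x
    simp only [Pi.pow_apply, Pi.mul_apply]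
    nlinarith [sq_nonneg (g x)]
  have hCS := mean_mul_sq_le hπ0 (Q *ᵥ g ^ 2) (f ^ 2)
  have hQg := hrev.mean_sq_mulVec_le hπ1 (one_vecMul_of_mem_rowStochastic hQ) hgap (g ^ 2)
  have hfK := mean_mul_sq_le hπ0 (f ^ 2) 1
  have hmean1 : mean π 1 = 1 := by simpa [mean] using hπ1
  rw [show ∀ h : D → ℝ, (h ^ 2) ^ 2 = h ^ 4 from fun h => by ring] at hCS hQg hfK
  rw [mul_one, one_pow, hmean1, mul_one] at hfK
  have hMK : M ^ 2 ≤ t ^ 2 * K := by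
    have hM : M ≤ t * mean π (f ^ 2) := hgap f hf
    nlinarith
  rw [mul_assoc]
  refine le_two_mul_of_sq_le (mul_nonneg ht hK0) ?_
  calc Y ^ 2 ≤ mean π (Q *ᵥ g ^ 2 * f ^ 2) ^ 2 := pow_le_pow_left₀ hY0 hYT 2
    _ ≤ mean π ((Q *ᵥ g ^ 2) ^ 2) * K := hCS
    _ ≤ (M ^ 2 + t * Y) * K := by
      gcongr
      nlinarith [mul_nonneg ht (sq_nonneg M)]
    _ ≤ (t * K) ^ 2 + t * K * Y := by nlinarith

theorem IsReversible.norm4_mulVec_le (hπ0 : ∀ x, 0 ≤ π x) (hπ1 : ∑ x, π x = 1)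
    (hQ : Q ∈ rowStochastic ℝ D) (hrev : IsReversible π Q) {t : ℝ} (ht : 0 ≤ t)
    (hgap : ∀ h, mean π h = 0 → mean π ((Q *ᵥ h) ^ 2) ≤ t * mean π (h ^ 2))
    {f : D → ℝ} (hf : mean π f = 0) :
    norm4 π (Q *ᵥ f) ≤ (2 * t) ^ (1 / 4 : ℝ) * norm4 π f := by
  have hK0 : 0 ≤ mean π (f ^ 4) := mean_nonneg hπ0 fun x => Even.pow_nonneg (by decide) (f x)
  rw [norm4_eq_mean_rpow, norm4_eq_mean_rpow, ← Real.mul_rpow (by positivity) hK0]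
  exact Real.rpow_le_rpow (mean_nonneg hπ0 fun x => Even.pow_nonneg (by decide) _)
    (hrev.mean_mulVec_pow_four_le hπ0 hπ1 hQ ht hgap hf) (by norm_num)

end FourthMoment

lemma Real.rpow_one_div_four_sq_pow {β : ℝ} (hβ : 0 ≤ β) (n : ℕ) :
    ((β ^ n) ^ 2) ^ (1 / 4 : ℝ) = β ^ ((n : ℝ) / 2) := by
  rw [← pow_mul, ← Real.rpow_natCast, ← Real.rpow_mul hβ]
  push_cast
  ring_nf

lemma Real.two_rpow_one_div_four_le : (2 : ℝ) ^ (1 / 4 : ℝ) ≤ 2 * Real.sqrt 2 :=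
  calc (2 : ℝ) ^ (1 / 4 : ℝ) ≤ 2 ^ (1 : ℝ) :=
        Real.rpow_le_rpow_of_exponent_le (by norm_num) (by norm_num)
    _ ≤ 2 * Real.sqrt 2 := by simp

theorem stmt_13_general {D : Type*} [Fintype D] [DecidableEq D]
    (π : D → ℝ) (hπpos : ∀ x, 0 < π x) (hπsum : ∑ x, π x = 1)
    (P : Matrix D D ℝ) (hPnonneg : ∀ x y, 0 ≤ P x y)
    (hProw : ∀ x, ∑ y, P x y = 1)
    (hrev : ∀ x y, π x * P x y = π y * P y x)
    (u : Fin (Fintype.card D) → D → ℝ) (βs : Fin (Fintype.card D) → ℝ)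
    (h_eig : ∀ k, P.mulVec (u k) = βs k • u k)
    (h_ortho : ∀ k l, ∑ x, u k x * u l x * π x = if k = l then (1 : ℝ) else 0)
    (h_u0 : ∀ k : Fin (Fintype.card D), (k : ℕ) = 0 → u k = fun _ => 1)
    (β : ℝ)
    (hβ : IsGreatest {r : ℝ | ∃ k : Fin (Fintype.card D), (k : ℕ) ≠ 0 ∧ r = |βs k|} β)
    (n : ℕ) :
    ∀ f : D → ℝ, (∑ x, f x * π x = 0) →
      norm4 π ((P ^ n).mulVec f)
        ≤ 2 * Real.sqrt 2 * β ^ ((n : ℝ) / 2) * norm4 π f := by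
  intro f hf
  have hπ0 (x : D) : 0 ≤ π x := (hπpos x).le
  have hP : P ∈ rowStochastic ℝ D := mem_rowStochastic_iff_sum.2 ⟨hPnonneg, hProw⟩
  have hβ0 : 0 ≤ β := by
    obtain ⟨k, -, rfl⟩ := hβ.1
    exact abs_nonneg _
  have hgap (h : D → ℝ) (hh : mean π h = 0) :
      mean π ((P ^ n *ᵥ h) ^ 2) ≤ (β ^ n) ^ 2 * mean π (h ^ 2) := by
    refine (IsReversible.pow hrev n).mean_sq_mulVec_le_of_orthonormal_eigenvectors
      (Fintype.card_fin _) h_ortho (fun k => pow_mulVec_eq_pow_smul (h_eig k) n) (fun k => ?_) hh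
    by_cases hk : (k : ℕ) = 0
    · exact Or.inl (h_u0 k hk)
    · exact Or.inr (abs_pow (βs k) n ▸ pow_le_pow_left₀ (abs_nonneg _) (hβ.2 ⟨k, hk, rfl⟩) n)
  calc norm4 π (P ^ n *ᵥ f) ≤ (2 * (β ^ n) ^ 2) ^ (1 / 4 : ℝ) * norm4 π f :=
        (IsReversible.pow hrev n).norm4_mulVec_le hπ0 hπsum (pow_mem hP n) (sq_nonneg _) hgap hf
    _ = 2 ^ (1 / 4 : ℝ) * β ^ ((n : ℝ) / 2) * norm4 π f := by
        rw [Real.mul_rpow (by norm_num) (sq_nonneg _), Real.rpow_one_div_four_sq_pow hβ0]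
    _ ≤ 2 * Real.sqrt 2 * β ^ ((n : ℝ) / 2) * norm4 π f := by
        have := norm4_nonneg hπ0 f
        gcongr
        exact Real.two_rpow_one_div_four_le

theorem stmt_13 {D : Type*} [Fintype D] [Nonempty D] [DecidableEq D]
    (π : D → ℝ) (hπpos : ∀ x, 0 < π x) (hπsum : ∑ x, π x = 1)
    (P : Matrix D D ℝ) (hPnonneg : ∀ x y, 0 ≤ P x y)
    (hProw : ∀ x, ∑ y, P x y = 1)
    (hrev : ∀ x y, π x * P x y = π y * P y x)
    (hcard : 1 < Fintype.card D)
    (u : Fin (Fintype.card D) → D → ℝ) (βs : Fin (Fintype.card D) → ℝ)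
    (h_eig : ∀ k, P.mulVec (u k) = βs k • u k)
    (h_ortho : ∀ k l, ∑ x, u k x * u l x * π x = if k = l then (1 : ℝ) else 0)
    (h_b0 : ∀ k : Fin (Fintype.card D), (k : ℕ) = 0 → βs k = 1)
    (h_u0 : ∀ k : Fin (Fintype.card D), (k : ℕ) = 0 → u k = fun _ => 1)
    (h_erg : ∀ k : Fin (Fintype.card D), (k : ℕ) ≠ 0 → |βs k| < 1)
    (β : ℝ)
    (hβ : IsGreatest {r : ℝ | ∃ k : Fin (Fintype.card D), (k : ℕ) ≠ 0 ∧ r = |βs k|} β)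
    (n : ℕ) (hn : 1 ≤ n) :
    ∀ f : D → ℝ, (∑ x, f x * π x = 0) →
      norm4 π ((P ^ n).mulVec f)
        ≤ 2 * Real.sqrt 2 * β ^ ((n : ℝ) / 2) * norm4 π f :=
  stmt_13_general π hπpos hπsum P hPnonneg hProw hrev u βs h_eig h_ortho h_u0 β hβ n
end
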